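/- arXiv:0805.4782 — 3 statements merged into one kernel-verified Lean document; each statement's English description precedes it below -/
import Mathlib

section
/- Let p be an odd prime and define the following permutations in S_{2p} (acting on {1,…,2p}): φ₁ = ∏_{i=1}^{p}(i, i+p); φ₂ = [∏_{i=1}^{p-1}(i, i+p+1)]·(p, p+1); φ₃ = (1, p+1)·∏_{i=2}^{p}(i, 2p+2−i); φ₄ = (1, p+2)(2, p+1)·∏_{i=3}^{p}(i, 2p+3−i). Then each φ_k is an involution, φ₁φ₂ and φ₃φ₄ both have order p, every element of ⟨φ₁,φ₂⟩ commutes with every element of ⟨φ₃,φ₄⟩, and the subgroup ⟨φ₁,φ₂,φ₃,φ₄⟩ of S_{2p} is isomorphic to D_p × D_p (in particular it has order 4p²). -/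
/- We model the set {1, …, 2p} as `Bool × ZMod p`, where `(false, i)` stands for the
point `i ∈ {1, …, p}` (mod p) and `(true, j)` stands for `p + j`.  Under this
identification the permutations of the paper are:
`φ₁ = ∏ (i, i+p)`, `φ₂ = [∏_{i<p} (i, i+p+1)]·(p, p+1)`,
`φ₃ = (1, p+1)·∏_{i≥2} (i, 2p+2−i)`, `φ₄ = (1, p+2)(2, p+1)·∏_{i≥3} (i, 2p+3−i)`. -/

def phi1fun (p : ℕ) : Bool × ZMod p → Bool × ZMod p := fun x => (!x.1, x.2)

def phi2fun (p : ℕ) : Bool × ZMod p → Bool × ZMod p :=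
  fun x => if x.1 then (false, x.2 - 1) else (true, x.2 + 1)

def phi3fun (p : ℕ) : Bool × ZMod p → Bool × ZMod p := fun x => (!x.1, 2 - x.2)

def phi4fun (p : ℕ) : Bool × ZMod p → Bool × ZMod p := fun x => (!x.1, 3 - x.2)

theorem phi1fun_inv (p : ℕ) : Function.Involutive (phi1fun p) := by
  intro x; simp [phi1fun]

theorem phi2fun_inv (p : ℕ) : Function.Involutive (phi2fun p) := by
  rintro ⟨b, i⟩; cases b <;> simp [phi2fun]

theorem phi3fun_inv (p : ℕ) : Function.Involutive (phi3fun p) := by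
  intro x; simp [phi3fun]

theorem phi4fun_inv (p : ℕ) : Function.Involutive (phi4fun p) := by
  intro x; simp [phi4fun]

/-- `φ₁` as a permutation of the `2p`-element set. -/
def phi1 (p : ℕ) : Equiv.Perm (Bool × ZMod p) := (phi1fun_inv p).toPerm

/-- `φ₂` as a permutation of the `2p`-element set. -/
def phi2 (p : ℕ) : Equiv.Perm (Bool × ZMod p) := (phi2fun_inv p).toPerm

/-- `φ₃` as a permutation of the `2p`-element set. -/
def phi3 (p : ℕ) : Equiv.Perm (Bool × ZMod p) := (phi3fun_inv p).toPerm

/-- `φ₄` as a permutation of the `2p`-element set. -/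
def phi4 (p : ℕ) : Equiv.Perm (Bool × ZMod p) := (phi4fun_inv p).toPerm

/-!
The pairs `φ₁, φ₂` and `φ₃, φ₄` are the images of the generators `sr 0, sr 1` of `D_p` under two actions of
`D_p` on `Bool × ZMod p`: in the first, `r k` shifts the two copies of `ZMod p` in opposite
directions; in the second, `r k` shifts both by `-k` and the reflections are `x ↦ 2 - x + k`.
Both actions are faithful and commute with each other, so together they give a homomorphism
`D_p × D_p → S_{2p}` whose image is `⟨φ₁, φ₂, φ₃, φ₄⟩`. It is injective because the two images
meet trivially: a common rotation would shift by `k` and `-k` at once, so `2k = 0`, and a common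
reflection would force `2 = 0` in `ZMod p`.
-/

open DihedralGroup Equiv

namespace DihedralGroup

theorem closure_sr_zero_sr_one (n : ℕ) :
    Subgroup.closure {(sr 0 : DihedralGroup n), sr 1} = ⊤ := by
  set H := Subgroup.closure {(sr 0 : DihedralGroup n), sr 1}
  have h0 : sr 0 ∈ H := Subgroup.subset_closure (by simp)
  have h1 : sr 1 ∈ H := Subgroup.subset_closure (by simp)
  have hr : ∀ k : ZMod n, r k ∈ H := by
    intro k
    obtain ⟨m, rfl⟩ := ZMod.intCast_surjective k
    simpa [sr_mul_sr, r_one_zpow] using zpow_mem (mul_mem h0 h1) m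
  refine eq_top_iff.mpr fun g _ => ?_
  cases g with
  | r k => exact hr k
  | sr k => simpa [sr_mul_r] using mul_mem h0 (hr k)

theorem range_eq_closure_sr_zero_sr_one {n : ℕ} {G : Type*} [Group G]
    (f : DihedralGroup n →* G) : f.range = Subgroup.closure {f (sr 0), f (sr 1)} := by
  rw [MonoidHom.range_eq_map, ← closure_sr_zero_sr_one, MonoidHom.map_closure,
    Set.image_pair]

end DihedralGroup

theorem ZMod.isUnit_two_of_odd {n : ℕ} (hodd : Odd n) : IsUnit (2 : ZMod n) := by
  exact_mod_cast (ZMod.isUnit_iff_coprime 2 n).mpr (Nat.coprime_two_left.mpr hodd)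

section DihedralActions

variable (p : ℕ)

@[simps]
def oppositeShift (k : ZMod p) : Perm (Bool × ZMod p) where
  toFun x := (x.1, x.2 + if x.1 then -k else k)
  invFun x := (x.1, x.2 - if x.1 then -k else k)
  left_inv := by rintro ⟨b, x⟩; simp
  right_inv := by rintro ⟨b, x⟩; simp

@[simps]
def oppositeReflection (k : ZMod p) : Perm (Bool × ZMod p) where
  toFun x := (!x.1, x.2 + if x.1 then -k else k)
  invFun x := (!x.1, x.2 + if x.1 then -k else k)
  left_inv := by rintro ⟨b, x⟩; cases b <;> simp
  right_inv := by rintro ⟨b, x⟩; cases b <;> simp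

@[simps]
def diagonalShift (k : ZMod p) : Perm (Bool × ZMod p) where
  toFun x := (x.1, x.2 - k)
  invFun x := (x.1, x.2 + k)
  left_inv := by rintro ⟨b, x⟩; simp
  right_inv := by rintro ⟨b, x⟩; simp

@[simps]
def diagonalReflection (k : ZMod p) : Perm (Bool × ZMod p) where
  toFun x := (!x.1, 2 - x.2 + k)
  invFun x := (!x.1, 2 - x.2 + k)
  left_inv := by rintro ⟨b, x⟩; simp only [Bool.not_not]; ring_nf
  right_inv := by rintro ⟨b, x⟩; simp only [Bool.not_not]; ring_nf

def oppositeAction : DihedralGroup p →* Perm (Bool × ZMod p) where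
  toFun
    | r k => oppositeShift p k
    | sr k => oppositeReflection p k
  map_one' := by
    change oppositeShift p 0 = 1
    ext ⟨b, x⟩ <;> cases b <;> simp
  map_mul' := by
    rintro (i | i) (j | j) <;> ext ⟨b, x⟩ <;> cases b <;> simp <;> ring

def diagonalAction : DihedralGroup p →* Perm (Bool × ZMod p) where
  toFun
    | r k => diagonalShift p k
    | sr k => diagonalReflection p k
  map_one' := by
    change diagonalShift p 0 = 1
    ext ⟨b, x⟩ <;> simp
  map_mul' := by
    rintro (i | i) (j | j) <;> ext ⟨b, x⟩ <;> simp <;> ring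

@[simp] theorem oppositeAction_r (k : ZMod p) : oppositeAction p (r k) = oppositeShift p k := rfl
@[simp] theorem oppositeAction_sr (k : ZMod p) :
    oppositeAction p (sr k) = oppositeReflection p k := rfl
@[simp] theorem diagonalAction_r (k : ZMod p) : diagonalAction p (r k) = diagonalShift p k := rfl
@[simp] theorem diagonalAction_sr (k : ZMod p) :
    diagonalAction p (sr k) = diagonalReflection p k := rfl

theorem oppositeAction_injective : Function.Injective (oppositeAction p) := by
  refine (injective_iff_map_eq_one _).mpr fun g hg => ?_
  have h := DFunLike.congr_fun hg (false, 0)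
  cases g with
  | r k => simpa [← r_zero] using h
  | sr k => simp at h

theorem diagonalAction_injective : Function.Injective (diagonalAction p) := by
  refine (injective_iff_map_eq_one _).mpr fun g hg => ?_
  have h := DFunLike.congr_fun hg (false, 0)
  cases g with
  | r k => simpa [← r_zero] using h
  | sr k => simp at h

theorem commute_oppositeAction_diagonalAction (g h : DihedralGroup p) :
    Commute (oppositeAction p g) (diagonalAction p h) := by
  cases g <;> cases h <;> ext ⟨b, x⟩ <;> cases b <;> simp <;> ring

theorem disjoint_range_oppositeAction_diagonalAction (hodd : Odd p) (hp : p ≠ 1) :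
    Disjoint (oppositeAction p).range (diagonalAction p).range := by
  have h2 := ZMod.isUnit_two_of_odd hodd
  have : Fact (1 < p) := ⟨by obtain ⟨m, rfl⟩ := hodd; omega⟩
  refine Subgroup.disjoint_def.mpr ?_
  rintro _ ⟨g, rfl⟩ ⟨h, hgh⟩
  have at0 := DFunLike.congr_fun hgh (false, 0)
  cases g with
  | r i =>
    cases h with
    | r j =>
      have h0 : -j = i := by simpa using at0
      have h1 : j = i := by simpa using DFunLike.congr_fun hgh (true, 0)
      have hi : i = 0 := h2.mul_right_eq_zero.mp (by linear_combination -h0 - h1)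
      rw [hi, r_zero, map_one]
    | sr j => simp at at0
  | sr i =>
    cases h with
    | r j => simp at at0
    | sr j =>
      have h0 : 2 + j = i := by simpa using at0
      have h1 : 2 - 1 + j = 1 + i := by simpa using DFunLike.congr_fun hgh (false, 1)
      exact absurd (by linear_combination h0 - h1) h2.ne_zero

def dihedralProdAction : DihedralGroup p × DihedralGroup p →* Perm (Bool × ZMod p) :=
  (oppositeAction p).noncommCoprod (diagonalAction p) (commute_oppositeAction_diagonalAction p)

theorem dihedralProdAction_injective (hodd : Odd p) (hp : p ≠ 1) :
    Function.Injective (dihedralProdAction p) :=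
  (MonoidHom.noncommCoprod_injective _ _ _).mpr ⟨oppositeAction_injective p,
    diagonalAction_injective p, disjoint_range_oppositeAction_diagonalAction p hodd hp⟩

theorem phi1_eq : phi1 p = oppositeAction p (sr 0) := by
  ext ⟨b, x⟩ <;> cases b <;> simp [phi1, phi1fun]

theorem phi2_eq : phi2 p = oppositeAction p (sr 1) := by
  ext ⟨b, x⟩ <;> cases b <;> simp [phi2, phi2fun, sub_eq_add_neg]

theorem phi3_eq : phi3 p = diagonalAction p (sr 0) := by
  ext ⟨b, x⟩ <;> cases b <;> simp [phi3, phi3fun]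

theorem phi4_eq : phi4 p = diagonalAction p (sr 1) := by
  ext ⟨b, x⟩ <;> cases b <;> simp [phi4, phi4fun] <;> ring

theorem closure_phi1_phi2 : Subgroup.closure {phi1 p, phi2 p} = (oppositeAction p).range := by
  rw [range_eq_closure_sr_zero_sr_one, phi1_eq, phi2_eq]

theorem closure_phi3_phi4 : Subgroup.closure {phi3 p, phi4 p} = (diagonalAction p).range := by
  rw [range_eq_closure_sr_zero_sr_one, phi3_eq, phi4_eq]

theorem closure_phi_eq_range_dihedralProdAction :
    Subgroup.closure {phi1 p, phi2 p, phi3 p, phi4 p} = (dihedralProdAction p).range := by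
  rw [dihedralProdAction, MonoidHom.noncommCoprod_range, ← closure_phi1_phi2,
    ← closure_phi3_phi4, ← Subgroup.closure_union, Set.insert_union, Set.singleton_union]

end DihedralActions

/-- each `φ_k` is an involution, `φ₁φ₂` and `φ₃φ₄` have order `p`,
every element of `⟨φ₁,φ₂⟩` commutes with every element of `⟨φ₃,φ₄⟩`, and
`⟨φ₁,φ₂,φ₃,φ₄⟩ ≅ D_p × D_p`; in particular this subgroup has order `4p²`. -/
theorem stmt10 (p : ℕ) (hp : p.Prime) (hodd : Odd p) :
    (orderOf (phi1 p) = 2 ∧ orderOf (phi2 p) = 2 ∧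
      orderOf (phi3 p) = 2 ∧ orderOf (phi4 p) = 2) ∧
    orderOf (phi1 p * phi2 p) = p ∧ orderOf (phi3 p * phi4 p) = p ∧
    (∀ x ∈ Subgroup.closure {phi1 p, phi2 p}, ∀ y ∈ Subgroup.closure {phi3 p, phi4 p},
      Commute x y) ∧
    Nonempty (↥(Subgroup.closure {phi1 p, phi2 p, phi3 p, phi4 p})
      ≃* DihedralGroup p × DihedralGroup p) ∧
    Nat.card ↥(Subgroup.closure {phi1 p, phi2 p, phi3 p, phi4 p}) = 4 * p ^ 2 := by
  have hL := orderOf_injective _ (oppositeAction_injective p)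
  have hR := orderOf_injective _ (diagonalAction_injective p)
  have e : ↥(Subgroup.closure {phi1 p, phi2 p, phi3 p, phi4 p})
      ≃* DihedralGroup p × DihedralGroup p :=
    (MulEquiv.subgroupCongr (closure_phi_eq_range_dihedralProdAction p)).trans
      (MonoidHom.ofInjective
        (dihedralProdAction_injective p hodd hp.ne_one)).symm
  refine ⟨⟨?_, ?_, ?_, ?_⟩, ?_, ?_, ?_, ⟨e⟩, ?_⟩
  · rw [phi1_eq, hL, orderOf_sr]
  · rw [phi2_eq, hL, orderOf_sr]
  · rw [phi3_eq, hR, orderOf_sr]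
  · rw [phi4_eq, hR, orderOf_sr]
  · rw [phi1_eq, phi2_eq, ← map_mul, sr_mul_sr, sub_zero, hL, orderOf_r_one]
  · rw [phi3_eq, phi4_eq, ← map_mul, sr_mul_sr, sub_zero, hR, orderOf_r_one]
  · rw [closure_phi1_phi2, closure_phi3_phi4]
    rintro _ ⟨g, rfl⟩ _ ⟨h, rfl⟩
    exact commute_oppositeAction_diagonalAction p g h
  · rw [Nat.card_congr e.toEquiv, Nat.card_prod, nat_card]
    ring
end

section
/- Let p be an odd prime and G ≤ S_{2p} the group generated by φ₁, φ₂, φ₃, φ₄ as above (isomorphic to D_p × D_p). Consider the induced action of G on the set of pairs P_{ij} = {i, p+j} for 1 ≤ i, j ≤ p. Then G acts transitively on these p² pairs, and the stabilizer of P_{11} = {1, p+1} is ⟨φ₁, φ₃⟩, a Klein four group. -/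
def pairP (p : ℕ) (i j : ZMod p) : Set (Bool × ZMod p) := {(false, i), (true, j)}

/-! Every element of `G` is a signed affine map `(b, i) ↦ (c ⊕ b, ±i + t b)` of `Bool × ZMod p`.
The products `φ₄φ₃` and `φ₂φ₁` translate the two halves by `(1, 1)` and `(-1, 1)`; as `2` is
invertible mod `p`, they generate all translations, which gives transitivity. A signed affine map
preserving `{x₁, y₁}` sends both points to second coordinate `1`, so it is
`(b, i) ↦ (c ⊕ b, ±(i - 1) + 1)`, i.e. one of `1, φ₁, φ₃, φ₁φ₃`. For `p ≠ 2` these are distinct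
commuting involutions, so they form a Klein four group. -/

open Equiv
open scoped Pointwise

section SignedAffine

variable (A : Type*) [AddCommGroup A]

def signedAffine : Subgroup (Perm (Bool × A)) where
  carrier := {g | ∃ (c : Bool) (e : ℤˣ) (t : Bool → A), ∀ b i, g (b, i) = (c ^^ b, e • i + t b)}
  one_mem' := ⟨false, 1, fun _ => 0, fun b i => by simp⟩
  mul_mem' := by
    rintro g h ⟨c, e, t, hg⟩ ⟨c', e', t', hh⟩
    refine ⟨c ^^ c', e * e', fun b => e • t' b + t (c' ^^ b), fun b i => ?_⟩
    simp [hg, hh, mul_smul, smul_add, add_assoc]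
  inv_mem' := by
    rintro g ⟨c, e, t, hg⟩
    refine ⟨c, e⁻¹, fun b => -(e⁻¹ • t (c ^^ b)), fun b i => ?_⟩
    rw [Perm.inv_eq_iff_eq, hg]
    simp [smul_smul, Int.units_mul_self]

variable {A}

theorem exists_apply_eq_of_mem_signedAffine_of_image_pair_eq {g : Perm (Bool × A)}
    (hg : g ∈ signedAffine A) {x : A}
    (hfix : g '' {(false, x), (true, x)} = {(false, x), (true, x)}) :
    ∃ (c : Bool) (e : ℤˣ), ∀ b i, g (b, i) = (c ^^ b, e • (i - x) + x) := by
  obtain ⟨c, e, t, hg⟩ := hg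
  have ht : ∀ b, e • x + t b = x := by
    intro b
    have hmem : g (b, x) ∈ ({(false, x), (true, x)} : Set (Bool × A)) :=
      hfix ▸ Set.mem_image_of_mem _ (by cases b <;> simp)
    rw [hg] at hmem
    rcases hmem with h | h <;> exact congrArg Prod.snd h
  refine ⟨c, e, fun b i => ?_⟩
  rw [hg, eq_sub_of_add_eq' (ht b), smul_sub]
  abel_nf

theorem Equiv.Perm.pow_apply_of_forall_apply_eq_add {f : Perm (Bool × A)} {d : Bool → A}
    (hf : ∀ b i, f (b, i) = (b, i + d b)) (n : ℕ) (b : Bool) (i : A) :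
    (f ^ n) (b, i) = (b, i + n • d b) := by
  induction n with
  | zero => simp
  | succ n ih => rw [pow_succ', Perm.mul_apply, ih, hf, succ_nsmul, add_assoc]

end SignedAffine

section KleinFour

variable {G : Type*} [Group G] {a b : G}

theorem Subgroup.coe_closure_pair_of_mul_self (ha : a * a = 1) (hb : b * b = 1)
    (hab : b * a = a * b) : (Subgroup.closure {a, b} : Set G) = {1, a, b, a * b} := by
  have ha' : ∀ x, a * (a * x) = x := fun x => by rw [← mul_assoc, ha, one_mul]
  have hab' : ∀ x, b * (a * x) = a * (b * x) := fun x => by rw [← mul_assoc, hab, mul_assoc]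
  have ha_inv : a⁻¹ = a := inv_eq_of_mul_eq_one_right ha
  have hb_inv : b⁻¹ = b := inv_eq_of_mul_eq_one_right hb
  let V : Subgroup G :=
    { carrier := {1, a, b, a * b}
      one_mem' := by simp
      mul_mem' := by
        rintro x y (rfl | rfl | rfl | rfl) (rfl | rfl | rfl | rfl) <;>
          simp [mul_assoc, ha, hb, hab, ha', hab']
      inv_mem' := by
        rintro x (rfl | rfl | rfl | rfl) <;> simp [ha_inv, hb_inv, hab] }
  apply le_antisymm
  · exact (Subgroup.closure_le V).2 (by simp [Set.insert_subset_iff, V])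
  · have ha_mem : a ∈ Subgroup.closure {a, b} := Subgroup.subset_closure (by simp)
    have hb_mem : b ∈ Subgroup.closure {a, b} := Subgroup.subset_closure (by simp)
    simp only [Set.insert_subset_iff, Set.singleton_subset_iff, SetLike.mem_coe]
    exact ⟨one_mem _, ha_mem, hb_mem, mul_mem ha_mem hb_mem⟩

theorem Subgroup.isKleinFour_closure_pair (ha : a * a = 1) (hb : b * b = 1)
    (hab : b * a = a * b) (ha1 : a ≠ 1) (hb1 : b ≠ 1) (hne : a ≠ b) :
    IsKleinFour (Subgroup.closure {a, b}) where
  card_four := by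
    rw [← SetLike.coe_sort_coe, Nat.card_coe_set_eq, coe_closure_pair_of_mul_self ha hb hab,
      Set.ncard_eq_four]
    refine ⟨_, _, _, _, ha1.symm, hb1.symm, ?_, hne, ?_, ?_, rfl⟩
    · rw [ne_comm, Ne, mul_eq_one_iff_eq_inv, inv_eq_of_mul_eq_one_right hb]
      exact hne
    · simpa using hb1
    · simpa using ha1
  exponent_two := by
    have hsq : ∀ g : Subgroup.closure {a, b}, g ^ 2 = 1 := by
      rintro ⟨g, hg⟩
      rw [← SetLike.mem_coe, coe_closure_pair_of_mul_self ha hb hab] at hg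
      ext
      rcases hg with rfl | rfl | rfl | rfl
      · simp
      · simpa [pow_two] using ha
      · simpa [pow_two] using hb
      · simp only [pow_two, Subgroup.coe_mul, OneMemClass.coe_one]
        rw [mul_assoc, ← mul_assoc b, hab, mul_assoc, hb, mul_one, ha]
    have : Nontrivial (Subgroup.closure {a, b}) :=
      nontrivial_of_ne ⟨a, Subgroup.subset_closure (by simp)⟩ 1
        (by simpa [Subtype.ext_iff] using ha1)
    rcases (Nat.dvd_prime Nat.prime_two).1 (Monoid.exponent_dvd_iff_forall_pow_eq_one.2 hsq)
      with h | h
    · exact absurd (Monoid.exp_eq_one_iff.1 h) (not_subsingleton _)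
    · exact h

end KleinFour

section Phi

variable (p : ℕ)

theorem closure_phi_le_signedAffine :
    Subgroup.closure {phi1 p, phi2 p, phi3 p, phi4 p} ≤ signedAffine (ZMod p) := by
  rw [Subgroup.closure_le]
  rintro g (rfl | rfl | rfl | rfl)
  · exact ⟨true, 1, fun _ => 0, fun b i => by simp [phi1, phi1fun]⟩
  · exact ⟨true, 1, fun b => if b then -1 else 1, fun b i => by
      cases b <;> simp [phi2, phi2fun, sub_eq_add_neg]⟩
  · exact ⟨true, -1, fun _ => 2, fun b i => by simp [phi3, phi3fun, neg_add_eq_sub]⟩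
  · exact ⟨true, -1, fun _ => 3, fun b i => by simp [phi4, phi4fun, neg_add_eq_sub]⟩

theorem phi4_mul_phi3_apply (b : Bool) (i : ZMod p) :
    (phi4 p * phi3 p) (b, i) = (b, i + 1) := by
  refine Prod.ext (Bool.not_not b) ?_
  show 3 - (2 - i) = i + 1
  ring

theorem phi2_mul_phi1_apply (b : Bool) (i : ZMod p) :
    (phi2 p * phi1 p) (b, i) = (b, i + if b then 1 else -1) := by
  cases b <;> simp [phi1, phi2, phi1fun, phi2fun, sub_eq_add_neg]

theorem exists_mem_closure_image_pairP_eq [Fact p.Prime] (h2 : (2 : ZMod p) ≠ 0)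
    (i j k l : ZMod p) :
    ∃ g ∈ Subgroup.closure {phi1 p, phi2 p, phi3 p, phi4 p}, ⇑g '' pairP p i j = pairP p k l := by
  have hmem : ∀ g ∈ ({phi1 p, phi2 p, phi3 p, phi4 p} : Set (Perm (Bool × ZMod p))),
      g ∈ Subgroup.closure {phi1 p, phi2 p, phi3 p, phi4 p} :=
    fun _ hg => Subgroup.subset_closure hg
  -- `(φ₄φ₃)^m (φ₂φ₁)^n` sends `(x_i, y_j)` to `(x_{i+m-n}, y_{j+m+n})`
  set m : ZMod p := ((k - i) + (l - j)) / 2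
  set n : ZMod p := ((l - j) - (k - i)) / 2
  refine ⟨(phi4 p * phi3 p) ^ m.val * (phi2 p * phi1 p) ^ n.val,
    mul_mem (pow_mem (mul_mem (hmem _ (by simp)) (hmem _ (by simp))) _)
      (pow_mem (mul_mem (hmem _ (by simp)) (hmem _ (by simp))) _), ?_⟩
  simp only [pairP, Set.image_pair, Perm.mul_apply,
    Perm.pow_apply_of_forall_apply_eq_add (phi2_mul_phi1_apply p),
    Perm.pow_apply_of_forall_apply_eq_add (phi4_mul_phi3_apply p), Bool.false_eq_true, ite_false,
    ite_true, smul_neg, nsmul_one, ZMod.natCast_zmod_val, m, n]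
  congr 3 <;> field_simp <;> ring

theorem mem_closure_phi1_phi3_of_apply_eq {g : Perm (Bool × ZMod p)} (c : Bool) (e : ℤˣ)
    (hg : ∀ b i, g (b, i) = (c ^^ b, e • (i - 1) + 1)) :
    g ∈ Subgroup.closure {phi1 p, phi3 p} := by
  have h1 : phi1 p ∈ Subgroup.closure {phi1 p, phi3 p} := Subgroup.subset_closure (by simp)
  have h3 : phi3 p ∈ Subgroup.closure {phi1 p, phi3 p} := Subgroup.subset_closure (by simp)
  obtain rfl | rfl := Int.units_eq_one_or e <;> cases c
  · obtain rfl : g = 1 := by ext ⟨b, i⟩ <;> simp [hg]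
    exact one_mem _
  · obtain rfl : g = phi1 p := by ext ⟨b, i⟩ <;> simp [hg, phi1, phi1fun]
    exact h1
  · obtain rfl : g = phi1 p * phi3 p := by
      ext ⟨b, i⟩ <;>
        simp [hg, phi1, phi1fun, phi3, phi3fun, sub_add_eq_add_sub, one_add_one_eq_two]
    exact mul_mem h1 h3
  · obtain rfl : g = phi3 p := by
      ext ⟨b, i⟩ <;> simp [hg, phi3, phi3fun, sub_add_eq_add_sub, one_add_one_eq_two]
    exact h3

theorem image_pairP_one_one_of_mem_closure_phi1_phi3 {g : Perm (Bool × ZMod p)}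
    (hg : g ∈ Subgroup.closure {phi1 p, phi3 p}) : ⇑g '' pairP p 1 1 = pairP p 1 1 := by
  suffices Subgroup.closure {phi1 p, phi3 p} ≤
      MulAction.stabilizer (Perm (Bool × ZMod p)) (pairP p 1 1) by
    simpa only [MulAction.mem_stabilizer_iff, ← Set.image_smul, Perm.smul_def] using this hg
  rw [Subgroup.closure_le]
  rintro g (rfl | rfl) <;>
    simp only [SetLike.mem_coe, MulAction.mem_stabilizer_iff, ← Set.image_smul, Perm.smul_def]
  · rw [pairP, Set.image_pair, Set.pair_comm]
    simp [phi1, phi1fun]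
  · rw [pairP, Set.image_pair, Set.pair_comm]
    norm_num [phi3, phi3fun]

theorem phi1_mul_self : phi1 p * phi1 p = 1 := Equiv.ext (phi1fun_inv p)

theorem phi3_mul_self : phi3 p * phi3 p = 1 := Equiv.ext (phi3fun_inv p)

theorem phi3_mul_phi1 : phi3 p * phi1 p = phi1 p * phi3 p := by
  ext ⟨b, i⟩ <;> simp [phi1, phi3, phi1fun, phi3fun]

theorem phi1_ne_one : phi1 p ≠ 1 := fun h => by
  simpa [phi1, phi1fun] using congrArg (· (false, 0)) h

theorem phi3_ne_one : phi3 p ≠ 1 := fun h => by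
  simpa [phi3, phi3fun] using congrArg (· (false, 0)) h

theorem phi1_ne_phi3 (h2 : (2 : ZMod p) ≠ 0) : phi1 p ≠ phi3 p := fun h => by
  simpa [phi1, phi3, phi1fun, phi3fun, h2] using (congrArg (· (false, 0)) h).symm

end Phi

/-- the group `G = ⟨φ₁,φ₂,φ₃,φ₄⟩ ≅ D_p × D_p` acts transitively on the `p²`
pairs `P_{ij}`, and the stabilizer of `P_{11}` is `⟨φ₁, φ₃⟩`, a Klein four group. -/
theorem stmt11 (p : ℕ) (hp : p.Prime) (hodd : Odd p) :
    (∀ i j k l : ZMod p, ∃ g ∈ Subgroup.closure {phi1 p, phi2 p, phi3 p, phi4 p},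
      ⇑g '' pairP p i j = pairP p k l) ∧
    (∀ g ∈ Subgroup.closure {phi1 p, phi2 p, phi3 p, phi4 p},
      (⇑g '' pairP p 1 1 = pairP p 1 1 ↔ g ∈ Subgroup.closure {phi1 p, phi3 p})) ∧
    Nat.card ↥(Subgroup.closure {phi1 p, phi3 p}) = 4 ∧
    Nonempty (↥(Subgroup.closure {phi1 p, phi3 p}) ≃* Multiplicative (ZMod 2 × ZMod 2)) := by
  have : Fact p.Prime := ⟨hp⟩
  have h2 : (2 : ZMod p) ≠ 0 := Ring.two_ne_zero <| by
    rw [ZMod.ringChar_zmod_n]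
    rintro rfl
    exact Nat.not_odd_iff_even.2 even_two hodd
  have : IsKleinFour (Subgroup.closure {phi1 p, phi3 p}) :=
    Subgroup.isKleinFour_closure_pair (phi1_mul_self p) (phi3_mul_self p) (phi3_mul_phi1 p)
      (phi1_ne_one p) (phi3_ne_one p) (phi1_ne_phi3 p h2)
  refine ⟨exists_mem_closure_image_pairP_eq p h2, fun g hg => ⟨fun hfix => ?_,
    image_pairP_one_one_of_mem_closure_phi1_phi3 p⟩, IsKleinFour.card_four,
    IsKleinFour.nonempty_mulEquiv⟩
  obtain ⟨c, e, hce⟩ :=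
    exists_apply_eq_of_mem_signedAffine_of_image_pair_eq (closure_phi_le_signedAffine p hg) hfix
  exact mem_closure_phi1_phi3_of_apply_eq p c e hce
end

section
/- Let p be an odd prime and consider G = D_p × D_p with generators σ₁ = (σ,1), τ₁ = (τ,1), σ₂ = (1,σ), τ₂ = (1,τ). For 1 ≤ j ≤ (p−1)/2, let L_j = ⟨σ₁^j σ₂, τ₁τ₂⟩. Then each L_j has order 2p (hence index 2p in G), has trivial normal core in G (i.e. the intersection of all conjugates of L_j is trivial), and the subgroups L_j for distinct j in {1, …,(p−1)/2} are pairwise non-conjugate in G. -/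
/-!
`L_j` is the graph `{(φ_j x, x)}` of the endomorphism `φ_j` of `D_p` that multiplies every
angle by `j`, so it has order `2p`. Conjugating an element `(φ_j x, x)` of the core by `(τ, 1)`
negates the first coordinate of a rotation, which forces `2j m = 0`; conjugating by `(σ, 1)`
shifts the first coordinate of a reflection by `2`. Either way only the identity survives.
Finally, conjugation sends a rotation `σ^m` to `σ^{±m}`, so a conjugate of `(σ^j, σ) ∈ L_j`
lies in `L_k` only if `k ≡ ±j (mod p)`, which for `1 ≤ j, k ≤ (p - 1)/2` means `j = k`.
-/

open DihedralGroup
open scoped Pointwise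

/-- The subgroup `L_j = ⟨σ₁^j σ₂, τ₁τ₂⟩` of `D_p × D_p`, where `σ₁ = (σ,1)`, `σ₂ = (1,σ)`,
`τ₁ = (τ,1)`, `τ₂ = (1,τ)`; so `σ₁^j σ₂ = (σ^j, σ)` and `τ₁τ₂ = (τ, τ)`. -/
def Lsub (p j : ℕ) : Subgroup (DihedralGroup p × DihedralGroup p) :=
  Subgroup.closure {(r (j : ZMod p), r 1), (sr 0, sr 0)}

namespace DihedralGroup

variable {n : ℕ}

def mulAngle (j : ZMod n) : DihedralGroup n →* DihedralGroup n where
  toFun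
    | r m => r (j * m)
    | sr m => sr (j * m)
  map_one' := congrArg r (mul_zero j)
  map_mul' := by
    rintro (a | a) (b | b) <;> simp only [r_mul_r, r_mul_sr, sr_mul_r, sr_mul_sr] <;> ring_nf

@[simp]
lemma mulAngle_r (j m : ZMod n) : mulAngle j (r m) = r (j * m) := rfl

@[simp]
lemma mulAngle_sr (j m : ZMod n) : mulAngle j (sr m) = sr (j * m) := rfl

lemma closure_r_one_sr_zero : Subgroup.closure {r 1, sr 0} = (⊤ : Subgroup (DihedralGroup n)) := by
  refine eq_top_iff.2 fun x _ => ?_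
  have hr : ∀ m : ZMod n, r m ∈ Subgroup.closure {r 1, sr (0 : ZMod n)} := fun m => by
    rw [← ZMod.intCast_zmod_cast m, ← r_one_zpow]
    exact zpow_mem (Subgroup.subset_closure (by simp)) _
  rcases x with m | m
  · exact hr m
  · rw [← zero_add m, ← sr_mul_r]
    exact mul_mem (Subgroup.subset_closure (by simp)) (hr m)

lemma conj_r_eq_or (g : DihedralGroup n) (m : ZMod n) :
    g * r m * g⁻¹ = r m ∨ g * r m * g⁻¹ = r (-m) := by
  rcases g with a | a
  · left
    rw [inv_r, r_mul_r, r_mul_r]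
    ring_nf
  · right
    rw [inv_sr, sr_mul_r, sr_mul_sr]
    ring_nf

end DihedralGroup

section Lsub

variable {n : ℕ}

lemma Lsub_eq_range (j : ℕ) :
    Lsub n j = ((mulAngle (j : ZMod n)).prod (MonoidHom.id _)).range := by
  rw [MonoidHom.range_eq_map, ← closure_r_one_sr_zero, MonoidHom.map_closure, Set.image_pair]
  simp [Lsub]

lemma mem_Lsub {j : ℕ} {x : DihedralGroup n × DihedralGroup n} :
    x ∈ Lsub n j ↔ mulAngle (j : ZMod n) x.2 = x.1 := by
  rw [Lsub_eq_range]
  constructor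
  · rintro ⟨y, rfl⟩
    rfl
  · intro h
    exact ⟨x.2, Prod.ext h rfl⟩

lemma card_Lsub (j : ℕ) : Nat.card (Lsub n j) = 2 * n := by
  rw [Lsub_eq_range]
  exact (Nat.card_range_of_injective fun _ _ h => congrArg Prod.snd h).trans nat_card

lemma index_Lsub [NeZero n] (j : ℕ) : (Lsub n j).index = 2 * n := by
  have h := (Lsub n j).card_mul_index
  rw [card_Lsub, Nat.card_prod, nat_card] at h
  exact Nat.eq_of_mul_eq_mul_left (by have := NeZero.pos n; omega) h

lemma normalCore_Lsub [Nontrivial (ZMod n)] {j : ℕ} (hj : IsUnit (2 * (j : ZMod n))) :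
    (Lsub n j).normalCore = ⊥ := by
  have h2 : (2 : ZMod n) ≠ 0 := (isUnit_of_mul_isUnit_left hj).ne_zero
  refine eq_bot_iff.2 fun ⟨x₁, x₂⟩ hx => ?_
  have hx₁ : mulAngle (j : ZMod n) x₂ = x₁ := mem_Lsub.1 ((Lsub n j).normalCore_le hx)
  subst hx₁
  rcases x₂ with m | m
  · have hc := mem_Lsub.1 (hx (sr 0, 1))
    simp only [Prod.inv_mk, Prod.mk_mul_mk, inv_sr, inv_one, mul_one, one_mul, mulAngle_r,
      sr_mul_r, sr_mul_sr, r.injEq] at hc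
    have hm : 2 * (j : ZMod n) * m = 0 := by linear_combination hc
    rw [hj.mul_right_eq_zero] at hm
    simp [hm, r_zero]
  · have hc := mem_Lsub.1 (hx (r 1, 1))
    simp only [Prod.inv_mk, Prod.mk_mul_mk, inv_r, inv_one, mul_one, one_mul, mulAngle_sr,
      r_mul_sr, sr_mul_r, sr.injEq] at hc
    exact absurd (by linear_combination hc) h2

lemma natCast_eq_or_eq_neg_of_conj_smul_Lsub_eq {j k : ℕ} (g : DihedralGroup n × DihedralGroup n)
    (hg : MulAut.conj g • Lsub n j = Lsub n k) :
    (k : ZMod n) = j ∨ (k : ZMod n) = -j := by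
  have hmem : ((r (j : ZMod n), r 1) : DihedralGroup n × DihedralGroup n) ∈ Lsub n j :=
    Subgroup.subset_closure (by simp)
  have hc := Subgroup.smul_mem_pointwise_smul _ (MulAut.conj g) _ hmem
  rw [hg, MulAut.smul_def, MulAut.conj_apply, mem_Lsub] at hc
  obtain ⟨g₁, g₂⟩ := g
  simp only [Prod.inv_mk, Prod.mk_mul_mk] at hc
  rcases conj_r_eq_or g₁ (j : ZMod n) with h₁ | h₁ <;>
    rcases conj_r_eq_or g₂ 1 with h₂ | h₂ <;>
    simp only [h₁, h₂, mulAngle_r, r.injEq] at hc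
  · exact .inl (by linear_combination hc)
  · exact .inr (by linear_combination -hc)
  · exact .inr (by linear_combination hc)
  · exact .inl (by linear_combination -hc)

end Lsub

lemma ZMod.eq_of_natCast_eq_or_eq_neg {n j k : ℕ} (hj : 0 < j) (hjn : j ≤ (n - 1) / 2)
    (hkn : k ≤ (n - 1) / 2) (h : (k : ZMod n) = j ∨ (k : ZMod n) = -j) : j = k := by
  rcases h with h | h
  · rw [ZMod.natCast_eq_natCast_iff', Nat.mod_eq_of_lt (by omega),
      Nat.mod_eq_of_lt (by omega)] at h
    exact h.symm
  · have hsum : ((j + k : ℕ) : ZMod n) = 0 := by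
      push_cast
      rw [h, add_neg_cancel]
    exact absurd ((ZMod.natCast_eq_zero_iff _ _).1 hsum)
      (Nat.not_dvd_of_pos_of_lt (by omega) (by omega))

theorem stmt18_general (p : ℕ) (hp : p.Prime) :
    ∀ j : ℕ, 1 ≤ j → j ≤ (p - 1) / 2 →
      Nat.card ↥(Lsub p j) = 2 * p ∧
      (Lsub p j).index = 2 * p ∧
      (Lsub p j).normalCore = ⊥ ∧
      (∀ k : ℕ, 1 ≤ k → k ≤ (p - 1) / 2 → j ≠ k →
        ∀ g : DihedralGroup p × DihedralGroup p, MulAut.conj g • Lsub p j ≠ Lsub p k) := by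
  intro j hj hjp
  have : Fact p.Prime := ⟨hp⟩
  have h2j : ((2 * j : ℕ) : ZMod p) ≠ 0 := fun h =>
    Nat.not_dvd_of_pos_of_lt (by omega) (by omega) ((ZMod.natCast_eq_zero_iff _ _).1 h)
  refine ⟨card_Lsub j, index_Lsub j, normalCore_Lsub ?_, ?_⟩
  · exact isUnit_iff_ne_zero.2 (by exact_mod_cast h2j)
  · intro k _ hkp hjk g hg
    exact hjk (ZMod.eq_of_natCast_eq_or_eq_neg hj hjp hkp
      (natCast_eq_or_eq_neg_of_conj_smul_Lsub_eq g hg))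

/-- For an odd prime `p` and `1 ≤ j ≤ (p−1)/2`, the subgroup
`L_j = ⟨σ₁^j σ₂, τ₁τ₂⟩` of `G = D_p × D_p` has order `2p` (hence index `2p` in `G`),
trivial normal core in `G`, and the `L_j` are pairwise non-conjugate in `G`. -/
theorem stmt18 (p : ℕ) (hp : p.Prime) (hodd : Odd p) :
    ∀ j : ℕ, 1 ≤ j → j ≤ (p - 1) / 2 →
      Nat.card ↥(Lsub p j) = 2 * p ∧
      (Lsub p j).index = 2 * p ∧
      (Lsub p j).normalCore = ⊥ ∧
      (∀ k : ℕ, 1 ≤ k → k ≤ (p - 1) / 2 → j ≠ k →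
        ∀ g : DihedralGroup p × DihedralGroup p, MulAut.conj g • Lsub p j ≠ Lsub p k) :=
  stmt18_general p hp
end
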